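/- arXiv:1606.03635 — 5 statements merged into one kernel-verified Lean document; each statement's English description precedes it below -/
import Mathlib

section
/- For every integer k ≥ 1, the integer complexity of 3^k equals 3k, i.e. ‖3^k‖ = 3k. -/
/-- `CanWrite n k` means the positive integer `n` can be written using exactly `k` ones
combined by addition and multiplication. -/
inductive CanWrite : ℕ → ℕ → Prop
  | one : CanWrite 1 1
  | add {a b j k : ℕ} : CanWrite a j → CanWrite b k → CanWrite (a + b) (j + k)
  | mul {a b j k : ℕ} : CanWrite a j → CanWrite b k → CanWrite (a * b) (j + k)

/-- The integer complexity `‖n‖`: the least number of ones needed to write `n`. -/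
noncomputable def cpx (n : ℕ) : ℕ := sInf {k | CanWrite n k}

/-- The defect `δ(n) = ‖n‖ - 3 log₃ n`. -/
noncomputable def defect (n : ℕ) : ℝ := (cpx n : ℝ) - 3 * Real.logb 3 n

/-- `n` is stable if `‖3^k n‖ = 3k + ‖n‖` for all `k ≥ 0`. -/
def Stable (n : ℕ) : Prop := ∀ k : ℕ, cpx (3 ^ k * n) = 3 * k + cpx n

/-- The stabilization length `K(n)`: the least `k` such that `3^k n` is stable. -/
noncomputable def stabLen (n : ℕ) : ℕ := sInf {k | Stable (3 ^ k * n)}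

/-- The stable complexity `‖n‖_st`: equal to `‖3^k n‖ - 3k` for any `k` with `3^k n` stable. -/
noncomputable def stableCpx (n : ℕ) : ℕ :=
  sInf {m | ∃ k : ℕ, Stable (3 ^ k * n) ∧ cpx (3 ^ k * n) = m + 3 * k}

/-- The stable defect `δ_st(n) = ‖n‖_st - 3 log₃ n`. -/
noncomputable def stableDefect (n : ℕ) : ℝ := (stableCpx n : ℝ) - 3 * Real.logb 3 n


lemma canWrite_pos {n j : ℕ} (h : CanWrite n j) : 1 ≤ n ∧ 1 ≤ j := by
  induction h with
  | one => exact ⟨le_refl 1, le_refl 1⟩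
  | add _ _ ih1 ih2 => exact ⟨le_add_right ih1.1, le_add_right ih1.2⟩
  | mul _ _ ih1 ih2 => exact ⟨Nat.mul_pos ih1.1 ih2.1, le_add_right ih1.2⟩

lemma pow3_ge {m : ℕ} (hm : 1 ≤ m) : 3 ^ m ≥ 3 := by
  calc (3:ℕ) = 3 ^ 1 := (pow_one 3).symm
    _ ≤ 3 ^ m := Nat.pow_le_pow_right (by norm_num) hm

lemma pow3_ge9 {m : ℕ} (hm : 2 ≤ m) : 3 ^ m ≥ 9 := by
  calc (9:ℕ) = 3 ^ 2 := by norm_num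
    _ ≤ 3 ^ m := Nat.pow_le_pow_right (by norm_num) hm

lemma cube_step {a : ℕ} (ha : 3 ≤ a) : (a + 1) ^ 3 ≤ 3 * a ^ 3 := by
  obtain ⟨c, rfl⟩ := Nat.exists_eq_add_of_le ha
  ring_nf
  nlinarith [c * c * c, sq_nonneg c]

lemma key_add {a b j k : ℕ} (ha : 1 ≤ a) (hb : 1 ≤ b) (hj : 1 ≤ j) (hk : 1 ≤ k)
    (h1 : a ^ 3 ≤ 3 ^ j) (h2 : b ^ 3 ≤ 3 ^ k) : (a + b) ^ 3 ≤ 3 ^ (j + k) := by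
  rw [pow_add]
  have h3j : 3 ^ j ≥ 3 := pow3_ge hj
  have h3k : 3 ^ k ≥ 3 := pow3_ge hk
  rcases le_or_gt 2 a with ha2 | ha2
  · rcases le_or_gt 2 b with hb2 | hb2
    · have hab : a + b ≤ a * b := by nlinarith
      calc (a + b) ^ 3 ≤ (a * b) ^ 3 := Nat.pow_le_pow_left hab 3
        _ = a ^ 3 * b ^ 3 := by ring
        _ ≤ 3 ^ j * 3 ^ k := Nat.mul_le_mul h1 h2
    · interval_cases b
      rcases le_or_gt 3 a with ha3 | ha3
      · calc (a + 1) ^ 3 ≤ 3 * a ^ 3 := cube_step ha3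
          _ ≤ 3 ^ k * 3 ^ j := Nat.mul_le_mul h3k h1
          _ = 3 ^ j * 3 ^ k := mul_comm _ _
      · interval_cases a
        have hj2 : 2 ≤ j := by
          by_contra hc
          push_neg at hc
          interval_cases j <;> omega
        have h9 : 3 ^ j ≥ 9 := pow3_ge9 hj2
        nlinarith
  · interval_cases a
    rcases le_or_gt 3 b with hb3 | hb3
    · have : (1 + b) ^ 3 ≤ 3 * b ^ 3 := by rw [add_comm]; exact cube_step hb3
      calc (1 + b) ^ 3 ≤ 3 * b ^ 3 := this
        _ ≤ 3 ^ j * 3 ^ k := Nat.mul_le_mul h3j h2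
    · interval_cases b
      · nlinarith
      · have hk2 : 2 ≤ k := by
          by_contra hc
          push_neg at hc
          interval_cases k <;> omega
        have h9 : 3 ^ k ≥ 9 := pow3_ge9 hk2
        nlinarith

lemma canWrite_cube_le {n j : ℕ} (h : CanWrite n j) : n ^ 3 ≤ 3 ^ j := by
  induction h with
  | one => norm_num
  | add h1 h2 ih1 ih2 =>
    exact key_add (canWrite_pos h1).1 (canWrite_pos h2).1 (canWrite_pos h1).2
      (canWrite_pos h2).2 ih1 ih2
  | mul h1 h2 ih1 ih2 =>
    calc (_ * _) ^ 3 = _ ^ 3 * _ ^ 3 := by ring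
      _ ≤ 3 ^ _ * 3 ^ _ := Nat.mul_le_mul ih1 ih2
      _ = 3 ^ (_ + _) := (pow_add 3 _ _).symm

lemma canWrite_three : CanWrite 3 3 := by
  have := CanWrite.add (CanWrite.add CanWrite.one CanWrite.one) CanWrite.one
  simpa using this

lemma canWrite_three_pow (k : ℕ) (hk : 1 ≤ k) : CanWrite (3 ^ k) (3 * k) := by
  obtain ⟨m, rfl⟩ := Nat.exists_eq_add_of_le hk
  induction m with
  | zero => simpa using canWrite_three
  | succ n ih =>
    have := CanWrite.mul (ih (by omega)) canWrite_three
    have e1 : 3 ^ (1 + n) * 3 = 3 ^ (1 + (n + 1)) := by ring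
    have e2 : 3 * (1 + n) + 3 = 3 * (1 + (n + 1)) := by ring
    rwa [e1, e2] at this

theorem cpx_three_pow (k : ℕ) (hk : 1 ≤ k) : cpx (3 ^ k) = 3 * k := by
  have hmem : 3 * k ∈ {j | CanWrite (3 ^ k) j} := canWrite_three_pow k hk
  apply le_antisymm (Nat.sInf_le hmem)
  apply le_csInf ⟨3 * k, hmem⟩
  intro j hj
  have h := canWrite_cube_le hj
  rw [← pow_mul, mul_comm k 3] at h
  have : (3 : ℕ) ^ (3 * k) ≤ 3 ^ j := h
  exact (Nat.pow_le_pow_iff_right (by norm_num)).1 this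
end

section
/- For any positive integer n, there exists K ≥ 0 such that 3^K·n is stable; that is, there exists K such that for every k ≥ K, ‖3^k·n‖ = 3(k − K) + ‖3^K·n‖. -/
theorem add_one_pow_three_le_three_pow_succ {b k : ℕ} (hb : 0 < b) (hk : 0 < k)
    (h : b ^ 3 ≤ 3 ^ k) : (b + 1) ^ 3 ≤ 3 ^ (k + 1) := by
  rw [pow_succ]
  rcases (show b = 1 ∨ b = 2 ∨ 3 ≤ b by omega) with rfl | rfl | hb3
  · calc (1 + 1) ^ 3 ≤ 3 ^ 1 * 3 := by norm_num
      _ ≤ 3 ^ k * 3 := by gcongr <;> omega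
  · have hk2 : 2 ≤ k := by
      by_contra! hk1
      have : 3 ^ k ≤ 3 ^ 1 := Nat.pow_le_pow_right (by norm_num) (by omega)
      omega
    calc (2 + 1) ^ 3 = 3 ^ 2 * 3 := by norm_num
      _ ≤ 3 ^ k * 3 := by gcongr; norm_num
  · have hcube : (b + 1) ^ 3 ≤ b ^ 3 * 3 := by nlinarith [Nat.mul_le_mul hb3 hb3]
    exact hcube.trans (Nat.mul_le_mul_right 3 h)

namespace CanWrite

theorem pos {a j : ℕ} (h : CanWrite a j) : 0 < a ∧ 0 < j := by
  induction h with
  | one => exact ⟨one_pos, one_pos⟩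
  | add _ _ iha ihb => omega
  | mul _ _ iha ihb => exact ⟨Nat.mul_pos iha.1 ihb.1, by omega⟩

theorem pow_three_le {a j : ℕ} (h : CanWrite a j) : a ^ 3 ≤ 3 ^ j := by
  induction h with
  | one => norm_num
  | @add a b j k ha hb iha ihb =>
    obtain ⟨ha0, hj0⟩ := ha.pos
    obtain ⟨hb0, hk0⟩ := hb.pos
    rcases (show a = 1 ∨ b = 1 ∨ 2 ≤ a ∧ 2 ≤ b by omega) with rfl | rfl | ⟨ha2, hb2⟩
    · calc (1 + b) ^ 3 = (b + 1) ^ 3 := by ring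
        _ ≤ 3 ^ (k + 1) := add_one_pow_three_le_three_pow_succ hb0 hk0 ihb
        _ ≤ 3 ^ (j + k) := Nat.pow_le_pow_right (by norm_num) (by omega)
    · calc (a + 1) ^ 3 ≤ 3 ^ (j + 1) := add_one_pow_three_le_three_pow_succ ha0 hj0 iha
        _ ≤ 3 ^ (j + k) := Nat.pow_le_pow_right (by norm_num) (by omega)
    · calc (a + b) ^ 3 ≤ (a * b) ^ 3 := by gcongr; nlinarith
        _ = a ^ 3 * b ^ 3 := mul_pow a b 3
        _ ≤ 3 ^ j * 3 ^ k := Nat.mul_le_mul iha ihb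
        _ = 3 ^ (j + k) := (pow_add 3 j k).symm
  | @mul a b j k _ _ iha ihb =>
    calc (a * b) ^ 3 = a ^ 3 * b ^ 3 := mul_pow a b 3
      _ ≤ 3 ^ j * 3 ^ k := Nat.mul_le_mul iha ihb
      _ = 3 ^ (j + k) := (pow_add 3 j k).symm

theorem self {n : ℕ} (hn : 0 < n) : CanWrite n n :=
  Nat.le_induction CanWrite.one (fun _ _ ih => ih.add CanWrite.one) n hn

theorem three : CanWrite 3 3 := (CanWrite.one.add CanWrite.one).add CanWrite.one

end CanWrite

theorem canWrite_cpx {n : ℕ} (hn : 0 < n) : CanWrite n (cpx n) :=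
  Nat.sInf_mem ⟨n, CanWrite.self hn⟩

theorem cpx_le {n k : ℕ} (h : CanWrite n k) : cpx n ≤ k := Nat.sInf_le h

theorem cpx_three_mul_le {n : ℕ} (hn : 0 < n) : cpx (3 * n) ≤ 3 + cpx n :=
  cpx_le (CanWrite.three.mul (canWrite_cpx hn))

theorem three_mul_le_cpx_three_pow_mul {n : ℕ} (hn : 0 < n) (k : ℕ) :
    3 * k ≤ cpx (3 ^ k * n) := by
  rw [← Nat.pow_le_pow_iff_right (by norm_num : 1 < 3)]
  calc 3 ^ (3 * k) = (3 ^ k) ^ 3 := by rw [← pow_mul, mul_comm]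
    _ ≤ (3 ^ k * n) ^ 3 := by gcongr; exact Nat.le_mul_of_pos_right _ hn
    _ ≤ 3 ^ cpx (3 ^ k * n) := (canWrite_cpx (by positivity)).pow_three_le

theorem antitone_cpx_three_pow_mul_sub {n : ℕ} (hn : 0 < n) :
    Antitone fun k => cpx (3 ^ k * n) - 3 * k := by
  refine antitone_nat_of_succ_le fun k => ?_
  have hstep : cpx (3 ^ (k + 1) * n) ≤ 3 + cpx (3 ^ k * n) := by
    rw [pow_succ', mul_assoc]
    exact cpx_three_mul_le (by positivity)
  omega

theorem exists_forall_ge_cpx_three_pow_mul_eq {n : ℕ} (hn : 0 < n) :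
    ∃ K : ℕ, ∀ k : ℕ, K ≤ k → cpx (3 ^ k * n) = 3 * (k - K) + cpx (3 ^ K * n) := by
  obtain ⟨K, hK⟩ := WellFoundedLT.antitone_chain_condition (antitone_cpx_three_pow_mul_sub hn)
  refine ⟨K, fun k hk => ?_⟩
  have hconst := hK k hk
  have hK3 := three_mul_le_cpx_three_pow_mul hn K
  have hk3 := three_mul_le_cpx_three_pow_mul hn k
  omega

theorem stable_three_pow_mul_of_forall_ge {n K : ℕ}
    (h : ∀ k : ℕ, K ≤ k → cpx (3 ^ k * n) = 3 * (k - K) + cpx (3 ^ K * n)) :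
    Stable (3 ^ K * n) := by
  intro j
  rw [← mul_assoc, ← pow_add, h (j + K) (Nat.le_add_left K j), Nat.add_sub_cancel]

theorem exists_stabilization (n : ℕ) (hn : 0 < n) :
    ∃ K : ℕ, Stable (3 ^ K * n) ∧
      ∀ k : ℕ, K ≤ k → cpx (3 ^ k * n) = 3 * (k - K) + cpx (3 ^ K * n) := by
  obtain ⟨K, hK⟩ := exists_forall_ge_cpx_three_pow_mul_eq hn
  exact ⟨K, stable_three_pow_mul_of_forall_ge hK, hK⟩
end

section
/- If n and m are positive integers such that the difference δ(n) − δ(m) is a rational number, then n = m·3^k for some integer k (and consequently δ(n) − δ(m) is an integer). -/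
private lemma nat3' (n m b a : ℕ) (hm : 0 < m) (hb : 0 < b)
    (heq : n ^ b = m ^ b * 3 ^ a) : ∃ k : ℕ, n = m * 3 ^ k := by
  have h3 : Nat.Prime 3 := by norm_num
  have hv : b * n.factorization 3 = b * m.factorization 3 + a := by
    have := congrArg (fun f => f 3) (congrArg Nat.factorization heq)
    simpa [Nat.factorization_mul (pow_ne_zero b hm.ne') (pow_ne_zero a (by norm_num : (3:ℕ) ≠ 0)),
      Nat.factorization_pow, h3.factorization] using this
  set vn := n.factorization 3
  set vm := m.factorization 3
  have hle : vm ≤ vn := Nat.le_of_mul_le_mul_left (by omega) hb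
  have h2 : b * (vn - vm) = b * vn - b * vm := Nat.mul_sub b vn vm
  have ha : a = b * (vn - vm) := by omega
  refine ⟨vn - vm, ?_⟩
  have : n ^ b = (m * 3 ^ (vn - vm)) ^ b := by
    rw [heq, ha, mul_pow, ← pow_mul, mul_comm b]
  exact Nat.pow_left_injective hb.ne' this

private lemma pow_eq_of_log' (n m b a : ℕ) (hn : 0 < n) (hm : 0 < m) (hb : 0 < b)
    (h : (b:ℝ) * (Real.log n - Real.log m) = a * Real.log 3) : ∃ k : ℕ, n = m * 3 ^ k := by
  have hn' : (0:ℝ) < n := by exact_mod_cast hn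
  have hm' : (0:ℝ) < m := by exact_mod_cast hm
  have hR : ((n:ℝ))^b = (m:ℝ)^b * 3^a := by
    have h1 : Real.log ((n:ℝ)^b) = Real.log ((m:ℝ)^b * 3^a) := by
      rw [Real.log_pow, Real.log_mul (by positivity) (by positivity), Real.log_pow, Real.log_pow]
      push_cast
      linarith
    calc ((n:ℝ))^b = Real.exp (Real.log ((n:ℝ)^b)) := (Real.exp_log (by positivity)).symm
      _ = Real.exp (Real.log ((m:ℝ)^b * 3^a)) := by rw [h1]
      _ = (m:ℝ)^b * 3^a := Real.exp_log (by positivity)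
  have heq : n ^ b = m ^ b * 3 ^ a := by exact_mod_cast hR
  exact nat3' n m b a hm hb heq

private lemma final' (n m : ℕ) (hm : 0 < m) (k : ℤ) (hnm : (n:ℝ) = (m:ℝ) * (3:ℝ)^k) :
    (∃ k : ℤ, (n : ℝ) = (m : ℝ) * (3 : ℝ) ^ k) ∧
    (∃ z : ℤ, defect n - defect m = (z : ℝ)) := by
  have hm' : ((m:ℝ)) ≠ 0 := by positivity
  refine ⟨⟨k, hnm⟩, ⟨(cpx n : ℤ) - cpx m - 3*k, ?_⟩⟩
  have hlog3 : Real.log 3 ≠ 0 := ne_of_gt (Real.log_pos (by norm_num))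
  have h1 : Real.logb 3 ((3:ℝ)^k) = k := by
    rw [Real.logb, Real.log_zpow]; field_simp
  have hlog : Real.logb 3 (n:ℝ) = Real.logb 3 m + k := by
    rw [hnm, Real.logb_mul hm' (by positivity), h1]
  unfold defect
  rw [hlog]
  push_cast
  ring

theorem defect_diff_rat (n m : ℕ) (hn : 0 < n) (hm : 0 < m)
    (h : ∃ q : ℚ, defect n - defect m = (q : ℝ)) :
    (∃ k : ℤ, (n : ℝ) = (m : ℝ) * (3 : ℝ) ^ k) ∧
    (∃ z : ℤ, defect n - defect m = (z : ℝ)) := by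
  obtain ⟨q, hq⟩ := h
  have hn' : (0:ℝ) < n := by exact_mod_cast hn
  have hm' : (0:ℝ) < m := by exact_mod_cast hm
  set r : ℚ := ((cpx n : ℚ) - (cpx m : ℚ) - q) / 3 with hr_def
  have hlogb : Real.logb 3 n - Real.logb 3 m = (r:ℝ) := by
    unfold defect at hq
    rw [hr_def]
    push_cast
    linarith
  have hlog3 : (0:ℝ) < Real.log 3 := Real.log_pos (by norm_num)
  have hlog : Real.log n - Real.log m = (r:ℝ) * Real.log 3 := by
    rw [Real.logb, Real.logb] at hlogb
    field_simp at hlogb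
    linarith
  have hbpos : 0 < r.den := r.pos
  have hrb : (r:ℝ) * (r.den:ℝ) = (r.num:ℝ) := by
    rw [show (r:ℝ) = (r.num:ℝ)/(r.den:ℝ) by exact_mod_cast (Rat.num_div_den r).symm]
    field_simp
  by_cases ha : 0 ≤ r.num
  · have htn : ((r.num.toNat : ℕ) : ℝ) = (r.num : ℝ) := by
      exact_mod_cast Int.toNat_of_nonneg ha
    obtain ⟨k, hk⟩ := pow_eq_of_log' n m r.den r.num.toNat hn hm hbpos (by
      rw [hlog]
      linear_combination Real.log 3 * hrb - Real.log 3 * htn)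
    refine final' n m hm (k : ℤ) ?_
    rw [hk, zpow_natCast]
    push_cast
    ring
  · push_neg at ha
    have htn : (((-r.num).toNat : ℕ) : ℝ) = -(r.num : ℝ) := by
      exact_mod_cast Int.toNat_of_nonneg (by omega : 0 ≤ -r.num)
    obtain ⟨k, hk⟩ := pow_eq_of_log' m n r.den (-r.num).toNat hm hn hbpos (by
      rw [show Real.log ↑m - Real.log ↑n = -((r:ℝ) * Real.log 3) by linarith]
      linear_combination -Real.log 3 * hrb - Real.log 3 * htn)
    refine final' n m hm (-(k : ℤ)) ?_
    have hk' : (m:ℝ) = (n:ℝ) * (3:ℝ)^k := by exact_mod_cast hk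
    rw [zpow_neg, zpow_natCast, hk']
    field_simp
end

section
/- For every positive integer n, there exist a unique leader m and a unique integer k ≥ 0 such that n = 3^k·m and δ(n) = δ(m); for this m and k one moreover has ‖n‖ = ‖m‖ + 3k. In particular, for every real r ≥ 0, each n with δ(n) < r arises this way from a unique leader m with δ(m) < r. -/
/-- A positive integer is a leader if it is the smallest positive integer with its defect. -/
def Leader (n : ℕ) : Prop := 0 < n ∧ ∀ m : ℕ, 0 < m → defect m = defect n → n ≤ m

/-!
Since `3 log₃ (3^k m) = 3k + 3 log₃ m`, equal defects of `n = 3^k m` and `m` force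
`‖n‖ = ‖m‖ + 3k`. Conversely, if `b ≤ a` have equal defects then `e := ‖a‖ - ‖b‖`
satisfies `a³ = 3^e b³`; comparing 3-adic valuations gives `3 ∣ e`, so `a = 3^(e/3) b`.
Hence all positive integers with the defect of `n` are `3`-power multiples of the least
one, the leader.
-/

lemma exists_eq_pow_mul_of_pow_eq {p a b n e : ℕ} [hp : Fact p.Prime] (hn : n ≠ 0)
    (hb : b ≠ 0) (h : a ^ n = p ^ e * b ^ n) : ∃ k, a = p ^ k * b := by
  have hval := congrArg (padicValNat p) h
  rw [padicValNat.pow, padicValNat.mul (pow_ne_zero e hp.out.ne_zero) (pow_ne_zero n hb),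
    padicValNat.prime_pow, padicValNat.pow] at hval
  obtain ⟨k, rfl⟩ : n ∣ e :=
    (Nat.dvd_add_left (dvd_mul_right n _)).mp (hval ▸ dvd_mul_right n _)
  refine ⟨k, Nat.pow_left_injective hn ?_⟩
  simp only [h, mul_pow, ← pow_mul, mul_comm n k]

lemma logb_three_pow_mul {m : ℕ} (k : ℕ) (hm : 0 < m) :
    Real.logb 3 ((3 ^ k * m : ℕ) : ℝ) = k + Real.logb 3 m := by
  push_cast
  rw [Real.logb_mul (by positivity) (by positivity), Real.logb_pow,
    Real.logb_self_eq_one (by norm_num), mul_one]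

lemma cpx_eq_of_defect_eq {m k : ℕ} (hm : 0 < m) (hd : defect (3 ^ k * m) = defect m) :
    cpx (3 ^ k * m) = cpx m + 3 * k := by
  rw [defect, defect, logb_three_pow_mul k hm] at hd
  have h : (cpx (3 ^ k * m) : ℝ) = cpx m + 3 * k := by linarith
  exact_mod_cast h

lemma pow_three_eq_of_defect_eq {a b : ℕ} (ha : 0 < a) (hb : 0 < b) (hle : b ≤ a)
    (hd : defect a = defect b) : a ^ 3 = 3 ^ (cpx a - cpx b) * b ^ 3 := by
  rw [defect, defect] at hd
  have hlog : Real.logb 3 (b : ℝ) ≤ Real.logb 3 a :=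
    Real.logb_le_logb_of_le (by norm_num) (by positivity) (by exact_mod_cast hle)
  have hcpx : cpx b ≤ cpx a := by exact_mod_cast (show (cpx b : ℝ) ≤ cpx a by linarith)
  have hexp : ((cpx a - cpx b : ℕ) : ℝ) =
      Real.logb 3 ((a : ℝ) ^ 3) - Real.logb 3 ((b : ℝ) ^ 3) := by
    rw [Nat.cast_sub hcpx, Real.logb_pow, Real.logb_pow]
    push_cast
    linarith
  have hreal : (a : ℝ) ^ 3 = 3 ^ (cpx a - cpx b) * (b : ℝ) ^ 3 := by
    rw [← Real.rpow_natCast (3 : ℝ) (cpx a - cpx b), hexp, Real.rpow_sub (by norm_num),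
      Real.rpow_logb (by norm_num) (by norm_num) (by positivity),
      Real.rpow_logb (by norm_num) (by norm_num) (by positivity),
      div_mul_cancel₀ _ (by positivity)]
  exact_mod_cast hreal

lemma exists_eq_three_pow_mul_of_defect_eq {a b : ℕ} (ha : 0 < a) (hb : 0 < b) (hle : b ≤ a)
    (hd : defect a = defect b) : ∃ k, a = 3 ^ k * b :=
  haveI : Fact (Nat.Prime 3) := ⟨Nat.prime_three⟩
  exists_eq_pow_mul_of_pow_eq three_ne_zero hb.ne' (pow_three_eq_of_defect_eq ha hb hle hd)

lemma exists_leader_le_defect_eq {n : ℕ} (hn : 0 < n) :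
    ∃ m, Leader m ∧ m ≤ n ∧ defect m = defect n := by
  classical
  have hex : ∃ m, 0 < m ∧ defect m = defect n := ⟨n, hn, rfl⟩
  obtain ⟨hpos, hdef⟩ := Nat.find_spec hex
  refine ⟨Nat.find hex, ⟨hpos, fun m hm hd ↦ Nat.find_min' hex ⟨hm, hd.trans hdef⟩⟩,
    Nat.find_min' hex ⟨hn, rfl⟩, hdef⟩

lemma Leader.eq_of_defect_eq {a b : ℕ} (ha : Leader a) (hb : Leader b)
    (hd : defect a = defect b) : a = b :=
  le_antisymm (ha.2 b hb.1 hd.symm) (hb.2 a ha.1 hd)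

theorem leader_decomposition (n : ℕ) (hn : 0 < n) :
    (∃! p : ℕ × ℕ, Leader p.1 ∧ n = 3 ^ p.2 * p.1 ∧ defect n = defect p.1) ∧
    (∀ m k : ℕ, Leader m → n = 3 ^ k * m → defect n = defect m →
      cpx n = cpx m + 3 * k ∧ ∀ r : ℝ, 0 ≤ r → defect n < r → defect m < r) := by
  refine ⟨?_, fun m k hm hnm hd ↦ ⟨?_, fun r _ hr ↦ hd ▸ hr⟩⟩
  · obtain ⟨m, hm, hle, hdef⟩ := exists_leader_le_defect_eq hn
    obtain ⟨k, hk⟩ := exists_eq_three_pow_mul_of_defect_eq hn hm.1 hle hdef.symm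
    refine ⟨(m, k), ⟨hm, hk, hdef.symm⟩, ?_⟩
    rintro ⟨m', k'⟩ ⟨hm', hk', hdef'⟩
    obtain rfl : m' = m := hm'.eq_of_defect_eq hm (hdef'.symm.trans hdef.symm)
    have hpow : 3 ^ k' = 3 ^ k := Nat.eq_of_mul_eq_mul_right hm.1 (hk'.symm.trans hk)
    obtain rfl : k' = k := Nat.pow_right_injective (by norm_num) hpow
    rfl
  · subst hnm
    exact cpx_eq_of_defect_eq hm.1 hd
end

section
/- Let f be a polynomial in r variables with nonnegative integer coefficients and nonzero constant term, and let b > 1 be a natural number. Writing v_b(n) for the b-adic valuation of n (the number of times b divides n), for all nonnegative integers k₁, …, k_r one has v_b(f(b^{k₁}, …, b^{k_r})) ≤ (Σ over nonzero coefficients a of f of (⌊log_b a⌋ + 1)) − 1. -/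
/-!
Substituting `X ^ kᵢ` for the variables turns `f` into a one-variable `g ∈ ℕ[X]` with
`g(0) ≠ 0`, the same value at `b`, and (digit counts being subadditive) at most as many base-`b`
digits in its coefficients as `f`. For such `g`, if `b ∣ g(b)` then `g(0) = b * c` and
`g(b) = b * (g.divX + c)(b)`: the polynomial `g.divX + C c` again has nonzero constant term and
at least one coefficient digit fewer, so by induction `b ^ v ∣ g(b)` forces `v` below the digit
count.
-/

open Polynomial Finset

namespace Nat

theorem length_digits_add_le {b : ℕ} (hb : 1 < b) (x y : ℕ) :
    (b.digits (x + y)).length ≤ (b.digits x).length + (b.digits y).length := by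
  rw [digits_length_le_iff hb, pow_add]
  calc x + y < (x + 1) * (y + 1) := by nlinarith
    _ ≤ b ^ (b.digits x).length * b ^ (b.digits y).length :=
      Nat.mul_le_mul (lt_base_pow_length_digits hb) (lt_base_pow_length_digits hb)

theorem length_digits_base_mul {b c : ℕ} (hb : 1 < b) (hc : c ≠ 0) :
    (b.digits (b * c)).length = (b.digits c).length + 1 := by
  rw [digits_base_mul hb (Nat.pos_of_ne_zero hc), List.length_cons]

end Nat

namespace Polynomial

-- For `a ≠ 0`, `(b.digits a).length = Nat.log b a + 1`; for `a = 0` it is `0`.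
def digitsLength (b : ℕ) (p : ℕ[X]) : ℕ :=
  p.sum fun _ a => (b.digits a).length

variable {b : ℕ}

theorem digitsLength_eq_sum_range {p : ℕ[X]} {n : ℕ} (hn : p.natDegree < n) :
    digitsLength b p = ∑ i ∈ range n, (b.digits (p.coeff i)).length :=
  sum_over_range' p (fun _ => by simp) n hn

@[simp]
theorem digitsLength_zero : digitsLength b 0 = 0 := by
  simp [digitsLength]

theorem digitsLength_monomial (n a : ℕ) : digitsLength b (monomial n a) = (b.digits a).length :=
  sum_monomial_index a _ (by simp)

theorem digitsLength_add_le (hb : 1 < b) (p q : ℕ[X]) :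
    digitsLength b (p + q) ≤ digitsLength b p + digitsLength b q := by
  have hp : p.natDegree < max p.natDegree q.natDegree + 1 := by omega
  have hq : q.natDegree < max p.natDegree q.natDegree + 1 := by omega
  have hpq := (natDegree_add_le p q).trans_lt (lt_add_one _)
  rw [digitsLength_eq_sum_range hp, digitsLength_eq_sum_range hq, digitsLength_eq_sum_range hpq,
    ← sum_add_distrib]
  exact sum_le_sum fun i _ => by simpa only [coeff_add] using Nat.length_digits_add_le hb _ _

theorem digitsLength_eq_add_digitsLength_divX (p : ℕ[X]) :
    digitsLength b p = (b.digits (p.coeff 0)).length + digitsLength b p.divX := by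
  rw [digitsLength_eq_sum_range (n := p.natDegree + 1 + 1) (by omega),
    digitsLength_eq_sum_range (Nat.lt_succ_of_le (natDegree_divX_le (p := p))), sum_range_succ',
    add_comm]
  simp only [coeff_divX]

theorem lt_digitsLength_of_pow_dvd_eval (hb : 1 < b) {v : ℕ} {p : ℕ[X]} (hp : p.coeff 0 ≠ 0)
    (hdvd : b ^ v ∣ p.eval b) : v < digitsLength b p := by
  induction v generalizing p with
  | zero =>
    rw [digitsLength_eq_add_digitsLength_divX]
    have := List.length_pos_iff.mpr (b.digits_ne_nil_iff_ne_zero.mpr hp)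
    omega
  | succ v ih =>
    have heval : p.eval b = b * p.divX.eval b + p.coeff 0 := by
      conv_lhs => rw [← X_mul_divX_add p]
      simp
    obtain ⟨c, hc⟩ : b ∣ p.coeff 0 := (Nat.dvd_add_right (dvd_mul_right _ _)).mp
      (heval ▸ (dvd_pow_self b v.succ_ne_zero).trans hdvd)
    have hc0 : c ≠ 0 := by rintro rfl; exact hp (by simpa using hc)
    set q := p.divX + C c
    have hq : q.coeff 0 ≠ 0 := by simp [q, hc0]
    have hq_eval : p.eval b = b * q.eval b := by simp [q, heval, hc, mul_add]
    have hvq : v < digitsLength b q := ih hq <|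
      Nat.dvd_of_mul_dvd_mul_left (zero_lt_one.trans hb) (by rwa [← pow_succ', ← hq_eval])
    calc v + 1 < digitsLength b q + 1 := by omega
      _ ≤ digitsLength b p.divX + (b.digits c).length + 1 := by
        grw [digitsLength_add_le hb, ← monomial_zero_left, digitsLength_monomial]
      _ = digitsLength b p := by
        rw [digitsLength_eq_add_digitsLength_divX p, hc, Nat.length_digits_base_mul hb hc0]; ring

end Polynomial

namespace MvPolynomial

variable {σ R : Type*} [CommSemiring R]

theorem eval_aeval_polynomial (x : R) (g : σ → R[X]) (f : MvPolynomial σ R) :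
    (aeval g f).eval x = eval (fun i => (g i).eval x) f := by
  simpa [coe_aeval_eq_eval] using congr($(comp_aeval g (Polynomial.aeval x)) f)

theorem aeval_X_pow_eq_sum_monomial [Fintype σ] (k : σ → ℕ) (f : MvPolynomial σ R) :
    aeval (fun i => Polynomial.X ^ k i) f =
      ∑ m ∈ f.support, Polynomial.monomial (∑ i, k i * m i) (f.coeff m) := by
  rw [aeval_def, eval₂_eq']
  refine sum_congr rfl fun m _ => ?_
  simp only [← pow_mul, prod_pow_eq_pow_sum, Polynomial.algebraMap_eq,
    Polynomial.C_mul_X_pow_eq_monomial]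

variable [Fintype σ] (k : σ → ℕ) (f : MvPolynomial σ ℕ)

theorem coeff_zero_le_coeff_zero_aeval_X_pow :
    f.coeff 0 ≤ (aeval (fun i => Polynomial.X ^ k i) f).coeff 0 := by
  rw [aeval_X_pow_eq_sum_monomial, finsetSum_coeff]
  by_cases h0 : 0 ∈ f.support
  · simpa using single_le_sum
      (f := fun m => (Polynomial.monomial (∑ i, k i * m i) (f.coeff m)).coeff 0)
      (fun _ _ => Nat.zero_le _) h0
  · simp [notMem_support_iff.mp h0]

theorem digitsLength_aeval_X_pow_le {b : ℕ} (hb : 1 < b) :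
    digitsLength b (aeval (fun i => Polynomial.X ^ k i) f) ≤
      ∑ m ∈ f.support, (b.digits (f.coeff m)).length := by
  rw [aeval_X_pow_eq_sum_monomial]
  refine (le_sum_of_subadditive _ digitsLength_zero.le (digitsLength_add_le hb) _ _).trans_eq ?_
  simp only [digitsLength_monomial]

end MvPolynomial

theorem valuation_of_poly_at_powers (r : ℕ) (f : MvPolynomial (Fin r) ℕ)
    (hconst : MvPolynomial.coeff 0 f ≠ 0) (b : ℕ) (hb : 1 < b) (k : Fin r → ℕ) :
    padicValNat b (MvPolynomial.eval (fun i => b ^ k i) f) ≤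
      (∑ m ∈ f.support, (Nat.log b (MvPolynomial.coeff m f) + 1)) - 1 := by
  set g : ℕ[X] := MvPolynomial.aeval (fun i => X ^ k i) f
  have hg : g.coeff 0 ≠ 0 := ((Nat.pos_of_ne_zero hconst).trans_le
    (MvPolynomial.coeff_zero_le_coeff_zero_aeval_X_pow k f)).ne'
  have hval : padicValNat b (g.eval b) < digitsLength b g :=
    lt_digitsLength_of_pow_dvd_eval hb hg pow_padicValNat_dvd
  have hdigits :
      digitsLength b g ≤ ∑ m ∈ f.support, (Nat.log b (MvPolynomial.coeff m f) + 1) :=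
    (MvPolynomial.digitsLength_aeval_X_pow_le k f hb).trans_eq
      (sum_congr rfl fun m hm => Nat.length_digits b _ hb (MvPolynomial.mem_support_iff.mp hm))
  have heval : g.eval b = MvPolynomial.eval (fun i => b ^ k i) f := by
    simp only [g, MvPolynomial.eval_aeval_polynomial, eval_pow, eval_X]
  rw [heval] at hval
  omega
end
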